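/- Every switching of a candidate morphism in the free SMC category (i.e. every graph obtained by gluing wires with switchings of the involved formulas) has exactly one more vertex than it has edges; consequently such a switching is acyclic if and only if it is connected. -/

import Mathlib

open SimpleGraph

namespace LLNetsAux

variable {V : Type*}

private lemma exrep {G : SimpleGraph V} (c : G.ConnectedComponent) :
    ∃ v, G.connectedComponentMk v = c := c.exists_rep
private lemma reach_transfer {G : SimpleGraph V} {a b : V} {u v : V}
    (h : G.Reachable u v) :
    (G.deleteEdges {s(a,b)}).Reachable u v ∨
    ((G.deleteEdges {s(a,b)}).Reachable u a ∧ (G.deleteEdges {s(a,b)}).Reachable b v) ∨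
    ((G.deleteEdges {s(a,b)}).Reachable u b ∧ (G.deleteEdges {s(a,b)}).Reachable a v) := by
  set G' := G.deleteEdges {s(a,b)} with hG'
  obtain ⟨p⟩ := h
  induction p with
  | nil => exact Or.inl (Reachable.refl _)
  | @cons u w v h p ih =>
    by_cases he : s(u,w) = s(a,b)
    · rw [Sym2.eq_iff] at he
      rcases he with ⟨rfl, rfl⟩ | ⟨rfl, rfl⟩
      · -- u = a, w = b
        rcases ih with h1 | ⟨h1, h2⟩ | ⟨h1, h2⟩
        · exact Or.inr (Or.inl ⟨Reachable.refl _, h1⟩)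
        · exact Or.inr (Or.inl ⟨Reachable.refl _, h2⟩)
        · exact Or.inl h2
      · -- u = b, w = a
        rcases ih with h1 | ⟨h1, h2⟩ | ⟨h1, h2⟩
        · exact Or.inr (Or.inr ⟨Reachable.refl _, h1⟩)
        · exact Or.inl h2
        · exact Or.inr (Or.inr ⟨Reachable.refl _, h2⟩)
    · have hadj : G'.Adj u w := by
        rw [hG', SimpleGraph.deleteEdges_adj]
        exact ⟨h, by simpa using he⟩
      rcases ih with h1 | ⟨h1, h2⟩ | ⟨h1, h2⟩
      · exact Or.inl (hadj.reachable.trans h1)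
      · exact Or.inr (Or.inl ⟨hadj.reachable.trans h1, h2⟩)
      · exact Or.inr (Or.inr ⟨hadj.reachable.trans h1, h2⟩)

private noncomputable def phi (G : SimpleGraph V) (a b : V) :
    (G.deleteEdges {s(a,b)}).ConnectedComponent → G.ConnectedComponent :=
  ConnectedComponent.lift (fun v => G.connectedComponentMk v) (by
    intro v w p _
    exact ConnectedComponent.eq.2 ⟨p.mapLe (deleteEdges_le _)⟩)

private lemma phi_mk (G : SimpleGraph V) (a b : V) (u : V) :
    phi G a b ((G.deleteEdges {s(a,b)}).connectedComponentMk u) = G.connectedComponentMk u := rfl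

private lemma phi_key {G : SimpleGraph V} {a b : V}
    {x y : (G.deleteEdges {s(a,b)}).ConnectedComponent} (h : phi G a b x = phi G a b y) :
    x = y ∨
    (x = (G.deleteEdges {s(a,b)}).connectedComponentMk a ∧
      y = (G.deleteEdges {s(a,b)}).connectedComponentMk b) ∨
    (x = (G.deleteEdges {s(a,b)}).connectedComponentMk b ∧
      y = (G.deleteEdges {s(a,b)}).connectedComponentMk a) := by
  obtain ⟨u, rfl⟩ := exrep x
  obtain ⟨v, rfl⟩ := exrep y
  rw [phi_mk, phi_mk, ConnectedComponent.eq] at h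
  rcases reach_transfer (a := a) (b := b) h with h1 | ⟨h1, h2⟩ | ⟨h1, h2⟩
  · exact Or.inl (ConnectedComponent.eq.2 h1)
  · exact Or.inr (Or.inl ⟨ConnectedComponent.eq.2 h1, ConnectedComponent.eq.2 h2.symm⟩)
  · exact Or.inr (Or.inr ⟨ConnectedComponent.eq.2 h1, ConnectedComponent.eq.2 h2.symm⟩)

private lemma phi_surj (G : SimpleGraph V) (a b : V) : Function.Surjective (phi G a b) := by
  intro z
  obtain ⟨u, rfl⟩ := exrep z
  exact ⟨_, phi_mk G a b u⟩

private lemma comp_card_nonbridge [Finite V] {G : SimpleGraph V} {a b : V}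
    (hr : (G.deleteEdges {s(a,b)}).Reachable a b) :
    Nat.card (G.deleteEdges {s(a,b)}).ConnectedComponent = Nat.card G.ConnectedComponent := by
  apply Nat.card_eq_of_bijective (phi G a b)
  refine ⟨fun x y h => ?_, phi_surj G a b⟩
  rcases phi_key h with h1 | ⟨h1, h2⟩ | ⟨h1, h2⟩
  · exact h1
  · rw [h1, h2]; exact ConnectedComponent.eq.2 hr
  · rw [h1, h2]; exact ConnectedComponent.eq.2 hr.symm

private lemma comp_card_bridge [Finite V] {G : SimpleGraph V} {a b : V} (hab : G.Adj a b)
    (hr : ¬ (G.deleteEdges {s(a,b)}).Reachable a b) :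
    Nat.card (G.deleteEdges {s(a,b)}).ConnectedComponent = Nat.card G.ConnectedComponent + 1 := by
  classical
  set G' := G.deleteEdges {s(a,b)} with hG'
  have hcard : Nat.card (G.ConnectedComponent ⊕ Unit) = Nat.card G.ConnectedComponent + 1 := by
    simp
  rw [← hcard]
  apply Nat.card_eq_of_bijective
    (fun x => if x = G'.connectedComponentMk b then Sum.inr () else Sum.inl (phi G a b x))
  constructor
  · intro x y h
    beta_reduce at h
    by_cases hx : x = G'.connectedComponentMk b
    · by_cases hy : y = G'.connectedComponentMk b
      · exact hx.trans hy.symm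
      · rw [if_pos hx, if_neg hy] at h; exact absurd h (by simp)
    · by_cases hy : y = G'.connectedComponentMk b
      · rw [if_neg hx, if_pos hy] at h; exact absurd h (by simp)
      · rw [if_neg hx, if_neg hy] at h
        rw [Sum.inl.injEq] at h
        rcases phi_key h with h1 | ⟨h1, h2⟩ | ⟨h1, h2⟩
        · exact h1
        · exact absurd h2 hy
        · exact absurd h1 hx
  · intro z
    rcases z with z | ⟨⟩
    · obtain ⟨u, rfl⟩ := exrep z
      by_cases hu : (G.deleteEdges {s(a,b)}).Reachable b u
      · refine ⟨G'.connectedComponentMk a, ?_⟩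
        have hne : G'.connectedComponentMk a ≠ G'.connectedComponentMk b := by
          rw [Ne, ConnectedComponent.eq]; exact hr
        have : G.Reachable a u := hab.reachable.trans (hu.mono (deleteEdges_le _))
        simp only [if_neg hne, phi_mk, Sum.inl.injEq]
        exact ConnectedComponent.eq.2 this
      · refine ⟨G'.connectedComponentMk u, ?_⟩
        have hne : G'.connectedComponentMk u ≠ G'.connectedComponentMk b := by
          rw [Ne, ConnectedComponent.eq]; exact fun hc => hu hc.symm
        simp only [if_neg hne]
        exact congrArg _ (phi_mk G a b u)
    · exact ⟨G'.connectedComponentMk b, by simp⟩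

private lemma comp_bot_card [Finite V] :
    Nat.card (⊥ : SimpleGraph V).ConnectedComponent = Nat.card V := by
  symm
  apply Nat.card_eq_of_bijective (fun v => (⊥ : SimpleGraph V).connectedComponentMk v)
  constructor
  · intro u v h
    exact reachable_bot.1 (ConnectedComponent.eq.1 h)
  · intro z; exact exrep z
private lemma card_edgeSet_delete [Finite V] {G : SimpleGraph V} {a b : V}
    (hab : s(a,b) ∈ G.edgeSet) :
    Nat.card (G.deleteEdges {s(a,b)}).edgeSet + 1 = Nat.card G.edgeSet := by
  rw [Nat.card_coe_set_eq, Nat.card_coe_set_eq]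
  have h1 : (G.deleteEdges {s(a,b)}).edgeSet = G.edgeSet \ {s(a,b)} :=
    SimpleGraph.edgeSet_deleteEdges _
  rw [h1, Set.ncard_diff_singleton_of_mem hab]
  have : 1 ≤ G.edgeSet.ncard := by
    rw [Nat.one_le_iff_ne_zero, Ne, Set.ncard_eq_zero (Set.toFinite _)]
    intro h; rw [h] at hab; exact hab
  omega

private lemma comp_lower [Finite V] :
    ∀ (n : ℕ) (G : SimpleGraph V), Nat.card G.edgeSet = n →
      Nat.card V ≤ n + Nat.card G.ConnectedComponent := by
  intro n
  induction n using Nat.strong_induction_on with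
  | _ n ih =>
    intro G hn
    by_cases hE : G.edgeSet = ∅
    · have hbot : G = ⊥ := SimpleGraph.edgeSet_eq_empty.1 hE
      subst hbot
      rw [comp_bot_card]
      omega
    · obtain ⟨e, he⟩ := Set.nonempty_iff_ne_empty.2 hE
      induction e using Sym2.ind with
      | _ a b =>
        have hab : G.Adj a b := (SimpleGraph.mem_edgeSet _).1 he
        have hdel := card_edgeSet_delete (G := G) (a := a) (b := b) he
        set G' := G.deleteEdges {s(a,b)} with hG'
        have hn' : Nat.card G'.edgeSet = n - 1 := by omega
        have hlt : n - 1 < n := by omega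
        have IH := ih (n-1) hlt G' hn'
        by_cases hr : G'.Reachable a b
        · have := comp_card_nonbridge (G := G) hr
          rw [← hG'] at this
          omega
        · have := comp_card_bridge (G := G) hab hr
          rw [← hG'] at this
          omega

private lemma comp_acyclic [Finite V] :
    ∀ (n : ℕ) (G : SimpleGraph V), Nat.card G.edgeSet = n → G.IsAcyclic →
      n + Nat.card G.ConnectedComponent = Nat.card V := by
  intro n
  induction n using Nat.strong_induction_on with
  | _ n ih =>
    intro G hn hac
    by_cases hE : G.edgeSet = ∅
    · have hbot : G = ⊥ := SimpleGraph.edgeSet_eq_empty.1 hE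
      have hn0 : n = 0 := by
        rw [← hn, Nat.card_coe_set_eq, hE, Set.ncard_empty]
      subst hbot
      rw [comp_bot_card, hn0]
      omega
    · obtain ⟨e, he⟩ := Set.nonempty_iff_ne_empty.2 hE
      induction e using Sym2.ind with
      | _ a b =>
        have hab : G.Adj a b := (SimpleGraph.mem_edgeSet _).1 he
        have hdel := card_edgeSet_delete (G := G) (a := a) (b := b) he
        set G' := G.deleteEdges {s(a,b)} with hG'
        have hr : ¬ G'.Reachable a b := by
          intro hr
          obtain ⟨u, p, hp, _⟩ :=
            SimpleGraph.adj_and_reachable_delete_edges_iff_exists_cycle.1 ⟨hab, hr⟩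
          exact hac p hp
        have hac' : G'.IsAcyclic := by
          intro v c hc
          exact hac _ (SimpleGraph.Walk.IsCycle.mapLe (SimpleGraph.deleteEdges_le _) hc)
        have hn' : Nat.card G'.edgeSet = n - 1 := by omega
        have hlt : n - 1 < n := by omega
        have IH := ih (n-1) hlt G' hn' hac'
        have := comp_card_bridge (G := G) hab hr
        rw [← hG'] at this
        omega

private lemma connected_card_comp [Finite V] {G : SimpleGraph V} (h : G.Connected) :
    Nat.card G.ConnectedComponent = 1 := by
  rw [Nat.card_eq_one_iff_unique]
  constructor
  · constructor
    intro x y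
    obtain ⟨u, rfl⟩ := exrep x
    obtain ⟨v, rfl⟩ := exrep y
    exact ConnectedComponent.eq.2 (h.preconnected u v)
  · obtain ⟨v⟩ := h.nonempty
    exact ⟨G.connectedComponentMk v⟩

theorem key_graph [Finite V] (G : SimpleGraph V)
    (h : Nat.card V = Nat.card G.edgeSet + 1) :
    G.IsAcyclic ↔ G.Connected := by
  constructor
  · intro hac
    have := comp_acyclic (Nat.card G.edgeSet) G rfl hac
    have hcomp : Nat.card G.ConnectedComponent = 1 := by omega
    rw [Nat.card_eq_one_iff_unique] at hcomp
    obtain ⟨hsub, ⟨c⟩⟩ := hcomp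
    obtain ⟨v, _⟩ := exrep c
    have hnV : Nonempty V := ⟨v⟩
    refine SimpleGraph.Connected.mk (fun u w => ?_)
    have : G.connectedComponentMk u = G.connectedComponentMk w := Subsingleton.elim _ _
    exact ConnectedComponent.eq.1 this
  · intro hconn
    by_contra hac
    simp only [SimpleGraph.IsAcyclic, not_forall, not_not] at hac
    obtain ⟨v, c, hc⟩ := hac
    have hne : ∃ e, e ∈ c.edges := by
      have hnil := hc.ne_nil
      cases c with
      | nil => exact absurd rfl hnil
      | cons h p => exact ⟨_, List.mem_cons_self⟩
    obtain ⟨e, he⟩ := hne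
    have heE : e ∈ G.edgeSet := c.edges_subset_edgeSet he
    induction e using Sym2.ind with
    | _ a b =>
      have hab : G.Adj a b := (SimpleGraph.mem_edgeSet _).1 heE
      have hr : (G.deleteEdges {s(a,b)}).Reachable a b :=
        (SimpleGraph.adj_and_reachable_delete_edges_iff_exists_cycle.2 ⟨v, c, hc, he⟩).2
      have hdel := card_edgeSet_delete (G := G) (a := a) (b := b) heE
      have hcomp := comp_card_nonbridge (G := G) hr
      have hlow := comp_lower (Nat.card (G.deleteEdges {s(a,b)}).edgeSet)
        (G.deleteEdges {s(a,b)}) rfl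
      rw [hcomp, connected_card_comp hconn] at hlow
      omega

end LLNetsAux



/-!
STATEMENT 9: every switching of a candidate morphism in the free SMC category
(the switched syntax tree of the classical translation of the formula
`(A ⊗ ⨂_c (α_c ⊸ β_c)) ⊸ B`, glued with the wires, which go from negative
ports to positive ports and induce a bijection on the ports of each sort) has
exactly one more vertex than it has edges; consequently such a switching is
acyclic if and only if it is connected.
-/

namespace LLNets

inductive CF (X : Type*) : Type _
  | atom (x : X)
  | natom (x : X)
  | one
  | bot
  | tens (a b : CF X)
  | par (a b : CF X)

variable {X : Type*}

inductive Pos : CF X → Type _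
  | root (A : CF X) : Pos A
  | tl {A B : CF X} : Pos A → Pos (.tens A B)
  | tr {A B : CF X} : Pos B → Pos (.tens A B)
  | pl {A B : CF X} : Pos A → Pos (.par A B)
  | pr {A B : CF X} : Pos B → Pos (.par A B)

def Sw : CF X → Type
  | .atom _ => Unit
  | .natom _ => Unit
  | .one => Unit
  | .bot => Unit
  | .tens a b => Sw a × Sw b
  | .par a b => Bool × (Sw a × Sw b)

def adj : (A : CF X) → Sw A → Pos A → Pos A → Prop
  | .atom _, _, _, _ => False
  | .natom _, _, _, _ => False
  | .one, _, _, _ => False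
  | .bot, _, _, _ => False
  | .tens a b, s, p, q =>
      (p = .root _ ∧ q = .tl (.root a)) ∨
      (p = .root _ ∧ q = .tr (.root b)) ∨
      (∃ p' q', p = .tl p' ∧ q = .tl q' ∧ adj a s.1 p' q') ∨
      (∃ p' q', p = .tr p' ∧ q = .tr q' ∧ adj b s.2 p' q')
  | .par a b, s, p, q =>
      (s.1 = true ∧ p = .root _ ∧ q = .pl (.root a)) ∨
      (s.1 = false ∧ p = .root _ ∧ q = .pr (.root b)) ∨
      (∃ p' q', p = .pl p' ∧ q = .pl q' ∧ adj a s.2.1 p' q') ∨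
      (∃ p' q', p = .pr p' ∧ q = .pr q' ∧ adj b s.2.2 p' q')

/-- The subformula at a position. -/
def subAt : {A : CF X} → Pos A → CF X
  | A, .root _ => A
  | _, .tl p => subAt p
  | _, .tr p => subAt p
  | _, .pl p => subAt p
  | _, .pr p => subAt p

/-- Positive leaves: positive literals and units `1`. -/
def PosLeaf (A : CF X) : Type _ :=
  {p : Pos A // (∃ x, subAt p = .atom x) ∨ subAt p = .one}

/-- Negative leaves: negated literals and `⊥`. -/
def NegLeaf (A : CF X) : Type _ :=
  {p : Pos A // (∃ x, subAt p = .natom x) ∨ subAt p = .bot}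

/-- Intuitionistic multiplicative linear logic formulas. -/
inductive IF (X : Type*) : Type _
  | atom (x : X)
  | unit
  | tens (a b : IF X)
  | limp (a b : IF X)

mutual
  /-- Positive classical translation of an IMLL formula. -/
  def trp : IF X → CF X
    | .atom x => .atom x
    | .unit => .one
    | .tens a b => .tens (trp a) (trp b)
    | .limp a b => .par (trn a) (trp b)

  /-- Negative classical translation (the De Morgan dual). -/
  def trn : IF X → CF X
    | .atom x => .natom x
    | .unit => .bot
    | .tens a b => .par (trn a) (trn b)
    | .limp a b => .tens (trp a) (trn b)
end

/-- `T` is a tensor of cell types `α ⊸ β` (possibly empty). -/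
inductive IsCells : IF X → Prop
  | unit : IsCells .unit
  | cell (a b : IF X) : IsCells (.limp a b)
  | tens {a b : IF X} : IsCells a → IsCells b → IsCells (.tens a b)

/-- The classical formula of a candidate morphism `A → B` with cells `T`. -/
def mform (A T B : IF X) : CF X := trp (.limp (.tens A T) B)

/-- A candidate morphism `A → B` over an SMC signature: a tensor `T` of cells
labelled by operations, together with wires from the negative ports to the
positive ports of `(A ⊗ T) ⊸ B`, inducing a bijection on the ports of each
sort. -/
structure Candidate (A B : IF X) where
  T : IF X
  cells : IsCells T
  wire : NegLeaf (mform A T B) → PosLeaf (mform A T B)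
  sorted : ∀ x : X,
    Set.BijOn (fun p : NegLeaf (mform A T B) => (wire p).1)
      {p | subAt p.1 = .natom x} {q : Pos (mform A T B) | subAt q = .atom x}

/-- A switching of a candidate morphism: the switched syntax tree glued with
the wires. -/
def glued {A B : IF X} (M : Candidate A B) (s : Sw (mform A M.T B)) :
    SimpleGraph (Pos (mform A M.T B)) :=
  SimpleGraph.fromRel (fun p q =>
    adj (mform A M.T B) s p q ∨
    ∃ n : NegLeaf (mform A M.T B), p = n.1 ∧ q = (M.wire n).1)

-- ===== auxiliary structural lemmas =====

/-- Number of positions (nodes of the syntax tree). -/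
def size : CF X → ℕ
  | .atom _ => 1
  | .natom _ => 1
  | .one => 1
  | .bot => 1
  | .tens a b => size a + size b + 1
  | .par a b => size a + size b + 1

/-- Number of `par` nodes. -/
def nparc : CF X → ℕ
  | .atom _ => 0
  | .natom _ => 0
  | .one => 0
  | .bot => 0
  | .tens a b => nparc a + nparc b
  | .par a b => nparc a + nparc b + 1

/-- Number of negative leaves. -/
def nnegc : CF X → ℕ
  | .atom _ => 0
  | .natom _ => 1
  | .one => 0
  | .bot => 1
  | .tens a b => nnegc a + nnegc b
  | .par a b => nnegc a + nnegc b

/-- Number of children in a switching. -/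
def nchild : CF X → ℕ
  | .atom _ => 0
  | .natom _ => 0
  | .one => 0
  | .bot => 0
  | .tens a b => nchild a + nchild b + 2
  | .par a b => nchild a + nchild b + 1

lemma nchild_nparc_size (A : CF X) : nchild A + nparc A + 1 = size A := by
  induction A <;> simp [nchild, nparc, size] <;> omega

lemma counts_tr (F : IF X) :
    nnegc (trp F) = nparc (trp F) ∧ nnegc (trn F) = nparc (trn F) + 1 := by
  induction F with
  | atom x => simp [trp, trn, nnegc, nparc]
  | unit => simp [trp, trn, nnegc, nparc]
  | tens a b iha ihb => simp [trp, trn, nnegc, nparc]; omega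
  | limp a b iha ihb => simp [trp, trn, nnegc, nparc]; omega

/-- All positions of a formula. -/
def posList : (A : CF X) → List (Pos A)
  | .atom _ => [.root _]
  | .natom _ => [.root _]
  | .one => [.root _]
  | .bot => [.root _]
  | .tens a b => .root _ :: ((posList a).map .tl ++ (posList b).map .tr)
  | .par a b => .root _ :: ((posList a).map .pl ++ (posList b).map .pr)

lemma mem_posList : ∀ {A : CF X} (p : Pos A), p ∈ posList A := by
  intro A p
  induction p with
  | root A => cases A <;> simp [posList]
  | tl p ih => simp [posList]; exact ih
  | tr p ih => simp [posList]; exact ih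
  | pl p ih => simp [posList]; exact ih
  | pr p ih => simp [posList]; exact ih

instance posFinite {A : CF X} : Finite (Pos A) := by
  apply Finite.of_surjective (fun i => (posList A).get i)
  intro p
  have h := mem_posList p
  rw [List.mem_iff_get] at h
  obtain ⟨i, hi⟩ := h
  exact ⟨i, hi⟩

lemma pos_leaf_card :
    (∀ x : X, Nat.card (Pos (.atom x : CF X)) = 1) ∧
    (∀ x : X, Nat.card (Pos (.natom x : CF X)) = 1) ∧
    (Nat.card (Pos (.one : CF X)) = 1) ∧ (Nat.card (Pos (.bot : CF X)) = 1) := by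
  refine ⟨fun x => ?_, fun x => ?_, ?_, ?_⟩ <;>
    (rw [Nat.card_eq_one_iff_unique]
     refine ⟨⟨fun p q => ?_⟩, ⟨.root _⟩⟩
     cases p; cases q; rfl)

lemma tl_inj {a b : CF X} : Function.Injective (@Pos.tl X a b) := by
  intro p q h; injection h

lemma tr_inj {a b : CF X} : Function.Injective (@Pos.tr X a b) := by
  intro p q h; injection h

lemma pl_inj {a b : CF X} : Function.Injective (@Pos.pl X a b) := by
  intro p q h; injection h

lemma pr_inj {a b : CF X} : Function.Injective (@Pos.pr X a b) := by
  intro p q h; injection h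

lemma set_split_tens {a b : CF X} (S : Set (Pos (.tens a b))) :
    S = (S ∩ {.root _}) ∪ Pos.tl '' (Pos.tl ⁻¹' S) ∪ Pos.tr '' (Pos.tr ⁻¹' S) := by
  ext p
  constructor
  · intro hp
    cases p with
    | root => exact Or.inl (Or.inl ⟨hp, rfl⟩)
    | tl q => exact Or.inl (Or.inr ⟨q, hp, rfl⟩)
    | tr q => exact Or.inr ⟨q, hp, rfl⟩
  · rintro ((⟨h, _⟩ | ⟨q, hq, rfl⟩) | ⟨q, hq, rfl⟩) <;> assumption

lemma set_split_par {a b : CF X} (S : Set (Pos (.par a b))) :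
    S = (S ∩ {.root _}) ∪ Pos.pl '' (Pos.pl ⁻¹' S) ∪ Pos.pr '' (Pos.pr ⁻¹' S) := by
  ext p
  constructor
  · intro hp
    cases p with
    | root => exact Or.inl (Or.inl ⟨hp, rfl⟩)
    | pl q => exact Or.inl (Or.inr ⟨q, hp, rfl⟩)
    | pr q => exact Or.inr ⟨q, hp, rfl⟩
  · rintro ((⟨h, _⟩ | ⟨q, hq, rfl⟩) | ⟨q, hq, rfl⟩) <;> assumption

open Classical in
lemma ncard_split_tens {a b : CF X} (S : Set (Pos (.tens a b))) :
    S.ncard = (if Pos.root _ ∈ S then 1 else 0) + (Pos.tl ⁻¹' S).ncard + (Pos.tr ⁻¹' S).ncard := by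
  classical
  conv_lhs => rw [set_split_tens S]
  rw [Set.ncard_union_eq, Set.ncard_union_eq, Set.ncard_image_of_injective _ tl_inj,
    Set.ncard_image_of_injective _ tr_inj]
  · congr 1
    · congr 1
      by_cases h : Pos.root _ ∈ S
      · rw [if_pos h]
        rw [Set.inter_eq_self_of_subset_right (by simpa using h), Set.ncard_singleton]
      · rw [if_neg h]
        have hem : S ∩ {Pos.root _} = ∅ :=
          Set.eq_empty_iff_forall_notMem.2 (by rintro p ⟨hp, rfl⟩; exact h hp)
        rw [hem, Set.ncard_empty]
  · rw [Set.disjoint_left]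
    rintro p hp ⟨q, _, rfl⟩
    exact absurd (Set.mem_singleton_iff.mp hp.2) (by simp)
  · rw [Set.disjoint_left]
    rintro p hp ⟨q', _, rfl⟩
    rcases hp with ⟨_, h⟩ | ⟨q, _, h⟩
    · exact absurd (Set.mem_singleton_iff.mp h) (by simp)
    · exact absurd h (by simp)

open Classical in
lemma ncard_split_par {a b : CF X} (S : Set (Pos (.par a b))) :
    S.ncard = (if Pos.root _ ∈ S then 1 else 0) + (Pos.pl ⁻¹' S).ncard + (Pos.pr ⁻¹' S).ncard := by
  classical
  conv_lhs => rw [set_split_par S]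
  rw [Set.ncard_union_eq, Set.ncard_union_eq, Set.ncard_image_of_injective _ pl_inj,
    Set.ncard_image_of_injective _ pr_inj]
  · congr 1
    · congr 1
      by_cases h : Pos.root _ ∈ S
      · rw [if_pos h]
        rw [Set.inter_eq_self_of_subset_right (by simpa using h), Set.ncard_singleton]
      · rw [if_neg h]
        have hem : S ∩ {Pos.root _} = ∅ :=
          Set.eq_empty_iff_forall_notMem.2 (by rintro p ⟨hp, rfl⟩; exact h hp)
        rw [hem, Set.ncard_empty]
  · rw [Set.disjoint_left]
    rintro p hp ⟨q, _, rfl⟩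
    exact absurd (Set.mem_singleton_iff.mp hp.2) (by simp)
  · rw [Set.disjoint_left]
    rintro p hp ⟨q', _, rfl⟩
    rcases hp with ⟨_, h⟩ | ⟨q, _, h⟩
    · exact absurd (Set.mem_singleton_iff.mp h) (by simp)
    · exact absurd h (by simp)

lemma card_pos (A : CF X) : Nat.card (Pos A) = size A := by
  induction A with
  | atom x => exact pos_leaf_card.1 x
  | natom x => exact pos_leaf_card.2.1 x
  | one => exact pos_leaf_card.2.2.1
  | bot => exact pos_leaf_card.2.2.2
  | tens a b iha ihb =>
    rw [← Set.ncard_univ, ncard_split_tens (Set.univ)]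
    simp only [Set.mem_univ, if_pos, Set.preimage_univ, Set.ncard_univ, iha, ihb, size]
    omega
  | par a b iha ihb =>
    rw [← Set.ncard_univ, ncard_split_par (Set.univ)]
    simp only [Set.mem_univ, if_pos, Set.preimage_univ, Set.ncard_univ, iha, ihb, size]
    omega

-- ===== adjacency structure =====

def depth : {A : CF X} → Pos A → ℕ
  | _, .root _ => 0
  | _, .tl p => depth p + 1
  | _, .tr p => depth p + 1
  | _, .pl p => depth p + 1
  | _, .pr p => depth p + 1

lemma adj_depth : ∀ {A : CF X} {s : Sw A} {p q : Pos A}, adj A s p q → depth q = depth p + 1 := by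
  intro A
  induction A with
  | atom x => intro s p q h; exact absurd h (by simp [adj])
  | natom x => intro s p q h; exact absurd h (by simp [adj])
  | one => intro s p q h; exact absurd h (by simp [adj])
  | bot => intro s p q h; exact absurd h (by simp [adj])
  | tens a b iha ihb =>
    intro s p q h
    simp only [adj] at h
    rcases h with ⟨rfl, rfl⟩ | ⟨rfl, rfl⟩ | ⟨p', q', rfl, rfl, h⟩ | ⟨p', q', rfl, rfl, h⟩
    · simp [depth]
    · simp [depth]
    · have := iha h; simp [depth]; omega
    · have := ihb h; simp [depth]; omega
  | par a b iha ihb =>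
    intro s p q h
    simp only [adj] at h
    rcases h with ⟨_, rfl, rfl⟩ | ⟨_, rfl, rfl⟩ | ⟨p', q', rfl, rfl, h⟩ | ⟨p', q', rfl, rfl, h⟩
    · simp [depth]
    · simp [depth]
    · have := iha h; simp [depth]; omega
    · have := ihb h; simp [depth]; omega

lemma adj_ne {A : CF X} {s : Sw A} {p q : Pos A} (h : adj A s p q) : p ≠ q := by
  intro hq; subst hq
  have := adj_depth h; omega

lemma adj_asymm {A : CF X} {s : Sw A} {p q : Pos A} (h : adj A s p q) (h' : adj A s q p) :
    False := by
  have h1 := adj_depth h; have h2 := adj_depth h'; omega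

lemma adj_ne_root {A : CF X} {s : Sw A} {p q : Pos A} (h : adj A s p q) : q ≠ .root A := by
  cases A with
  | atom x => exact absurd h (by simp [adj])
  | natom x => exact absurd h (by simp [adj])
  | one => exact absurd h (by simp [adj])
  | bot => exact absurd h (by simp [adj])
  | tens a b =>
    simp only [adj] at h
    rcases h with ⟨rfl, rfl⟩ | ⟨rfl, rfl⟩ | ⟨p', q', rfl, rfl, h⟩ | ⟨p', q', rfl, rfl, h⟩ <;>
      simp
  | par a b =>
    simp only [adj] at h
    rcases h with ⟨_, rfl, rfl⟩ | ⟨_, rfl, rfl⟩ | ⟨p', q', rfl, rfl, h⟩ | ⟨p', q', rfl, rfl, h⟩ <;>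
      simp

lemma adj_parent_unique : ∀ {A : CF X} {s : Sw A} {p p' q : Pos A},
    adj A s p q → adj A s p' q → p = p' := by
  intro A
  induction A with
  | atom x => intro s p p' q h; exact absurd h (by simp [adj])
  | natom x => intro s p p' q h; exact absurd h (by simp [adj])
  | one => intro s p p' q h; exact absurd h (by simp [adj])
  | bot => intro s p p' q h; exact absurd h (by simp [adj])
  | tens a b iha ihb =>
    intro s p p' q h h'
    simp only [adj] at h h'
    rcases h with ⟨rfl, rfl⟩ | ⟨rfl, rfl⟩ | ⟨p1, q1, rfl, rfl, h⟩ | ⟨p1, q1, rfl, rfl, h⟩ <;>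
      rcases h' with ⟨rfl, h2⟩ | ⟨rfl, h2⟩ | ⟨p2, q2, rfl, h2, hh⟩ | ⟨p2, q2, rfl, h2, hh⟩ <;>
      first
        | rfl
        | (cases h2; done)
        | (injection h2 with e1 e2 h2
           first
           | exact absurd h2.symm (adj_ne_root hh)
           | exact absurd h2 (adj_ne_root hh)
           | exact absurd h2 (adj_ne_root h)
           | exact absurd h2.symm (adj_ne_root h)
           | (subst h2; rw [iha h hh])
           | (subst h2; rw [ihb h hh]))
  | par a b iha ihb =>
    intro s p p' q h h'
    simp only [adj] at h h'
    rcases h with ⟨hs, rfl, rfl⟩ | ⟨hs, rfl, rfl⟩ | ⟨p1, q1, rfl, rfl, h⟩ | ⟨p1, q1, rfl, rfl, h⟩ <;>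
      rcases h' with ⟨hs2, rfl, h2⟩ | ⟨hs2, rfl, h2⟩ | ⟨p2, q2, rfl, h2, hh⟩ | ⟨p2, q2, rfl, h2, hh⟩ <;>
      first
        | rfl
        | (cases h2; done)
        | (injection h2 with e1 e2 h2
           first
           | exact absurd h2.symm (adj_ne_root hh)
           | exact absurd h2 (adj_ne_root hh)
           | exact absurd h2 (adj_ne_root h)
           | exact absurd h2.symm (adj_ne_root h)
           | (subst h2; rw [iha h hh])
           | (subst h2; rw [ihb h hh]))

/-- A position whose subformula is internal (tensor or par). -/
def internal : CF X → Prop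
  | .tens _ _ => True
  | .par _ _ => True
  | _ => False

lemma adj_internal : ∀ {A : CF X} {s : Sw A} {p q : Pos A},
    adj A s p q → internal (subAt p) := by
  intro A
  induction A with
  | atom x => intro s p q h; exact absurd h (by simp [adj])
  | natom x => intro s p q h; exact absurd h (by simp [adj])
  | one => intro s p q h; exact absurd h (by simp [adj])
  | bot => intro s p q h; exact absurd h (by simp [adj])
  | tens a b iha ihb =>
    intro s p q h
    simp only [adj] at h
    rcases h with ⟨rfl, rfl⟩ | ⟨rfl, rfl⟩ | ⟨p', q', rfl, rfl, h⟩ | ⟨p', q', rfl, rfl, h⟩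
    · simp [subAt, internal]
    · simp [subAt, internal]
    · simpa [subAt] using iha h
    · simpa [subAt] using ihb h
  | par a b iha ihb =>
    intro s p q h
    simp only [adj] at h
    rcases h with ⟨_, rfl, rfl⟩ | ⟨_, rfl, rfl⟩ | ⟨p', q', rfl, rfl, h⟩ | ⟨p', q', rfl, rfl, h⟩
    · simp [subAt, internal]
    · simp [subAt, internal]
    · simpa [subAt] using iha h
    · simpa [subAt] using ihb h

-- ===== counting children =====

def childSet (A : CF X) (s : Sw A) : Set (Pos A) := {q | ∃ p, adj A s p q}

lemma root_not_child {A : CF X} {s : Sw A} : (.root A) ∉ childSet A s := by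
  rintro ⟨p, hp⟩; exact adj_ne_root hp rfl

lemma preim_tl_child {a b : CF X} {s : Sw (.tens a b)} :
    Pos.tl ⁻¹' childSet (.tens a b) s = insert (Pos.root a) (childSet a s.1) := by
  ext q
  simp only [Set.mem_preimage, childSet, Set.mem_setOf_eq, Set.mem_insert_iff]
  constructor
  · rintro ⟨p, hp⟩
    simp only [adj] at hp
    rcases hp with ⟨rfl, h⟩ | ⟨rfl, h⟩ | ⟨p', q', rfl, h, hh⟩ | ⟨p', q', rfl, h, hh⟩
    · injection h with e1 e2 h; exact Or.inl h
    · exact absurd h (by simp)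
    · injection h with e1 e2 h; subst h; exact Or.inr ⟨p', hh⟩
    · exact absurd h (by simp)
  · rintro (rfl | ⟨p, hp⟩)
    · exact ⟨.root _, Or.inl ⟨rfl, rfl⟩⟩
    · exact ⟨.tl p, Or.inr (Or.inr (Or.inl ⟨p, q, rfl, rfl, hp⟩))⟩

lemma preim_tr_child {a b : CF X} {s : Sw (.tens a b)} :
    Pos.tr ⁻¹' childSet (.tens a b) s = insert (Pos.root b) (childSet b s.2) := by
  ext q
  simp only [Set.mem_preimage, childSet, Set.mem_setOf_eq, Set.mem_insert_iff]
  constructor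
  · rintro ⟨p, hp⟩
    simp only [adj] at hp
    rcases hp with ⟨rfl, h⟩ | ⟨rfl, h⟩ | ⟨p', q', rfl, h, hh⟩ | ⟨p', q', rfl, h, hh⟩
    · exact absurd h (by simp)
    · injection h with e1 e2 h; exact Or.inl h
    · exact absurd h (by simp)
    · injection h with e1 e2 h; subst h; exact Or.inr ⟨p', hh⟩
  · rintro (rfl | ⟨p, hp⟩)
    · exact ⟨.root _, Or.inr (Or.inl ⟨rfl, rfl⟩)⟩
    · exact ⟨.tr p, Or.inr (Or.inr (Or.inr ⟨p, q, rfl, rfl, hp⟩))⟩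

lemma preim_pl_child {a b : CF X} {s : Sw (.par a b)} :
    Pos.pl ⁻¹' childSet (.par a b) s =
      (if s.1 = true then insert (Pos.root a) (childSet a s.2.1) else childSet a s.2.1) := by
  ext q
  simp only [Set.mem_preimage, childSet, Set.mem_setOf_eq]
  constructor
  · rintro ⟨p, hp⟩
    simp only [adj] at hp
    rcases hp with ⟨hs, rfl, h⟩ | ⟨hs, rfl, h⟩ | ⟨p', q', rfl, h, hh⟩ | ⟨p', q', rfl, h, hh⟩
    · injection h with e1 e2 h; subst h; simp [hs]
    · exact absurd h (by simp)
    · injection h with e1 e2 h; subst h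
      by_cases hs : s.1 = true
      · simp only [if_pos hs, Set.mem_insert_iff]
        exact Or.inr ⟨p', hh⟩
      · simp only [if_neg hs]
        exact ⟨p', hh⟩
    · exact absurd h (by simp)
  · intro hq
    by_cases hs : s.1 = true
    · rw [if_pos hs] at hq
      rcases hq with rfl | ⟨p, hp⟩
      · exact ⟨.root _, Or.inl ⟨hs, rfl, rfl⟩⟩
      · exact ⟨.pl p, Or.inr (Or.inr (Or.inl ⟨p, q, rfl, rfl, hp⟩))⟩
    · rw [if_neg hs] at hq
      obtain ⟨p, hp⟩ := hq
      exact ⟨.pl p, Or.inr (Or.inr (Or.inl ⟨p, q, rfl, rfl, hp⟩))⟩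

lemma preim_pr_child {a b : CF X} {s : Sw (.par a b)} :
    Pos.pr ⁻¹' childSet (.par a b) s =
      (if s.1 = true then childSet b s.2.2 else insert (Pos.root b) (childSet b s.2.2)) := by
  ext q
  simp only [Set.mem_preimage, childSet, Set.mem_setOf_eq]
  constructor
  · rintro ⟨p, hp⟩
    simp only [adj] at hp
    rcases hp with ⟨hs, rfl, h⟩ | ⟨hs, rfl, h⟩ | ⟨p', q', rfl, h, hh⟩ | ⟨p', q', rfl, h, hh⟩
    · exact absurd h (by simp)
    · injection h with e1 e2 h; subst h; simp [hs]
    · exact absurd h (by simp)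
    · injection h with e1 e2 h; subst h
      by_cases hs : s.1 = true
      · simp only [if_pos hs]
        exact ⟨p', hh⟩
      · simp only [if_neg hs, Set.mem_insert_iff]
        exact Or.inr ⟨p', hh⟩
  · intro hq
    by_cases hs : s.1 = true
    · rw [if_pos hs] at hq
      obtain ⟨p, hp⟩ := hq
      exact ⟨.pr p, Or.inr (Or.inr (Or.inr ⟨p, q, rfl, rfl, hp⟩))⟩
    · rw [if_neg hs] at hq
      rcases hq with rfl | ⟨p, hp⟩
      · exact ⟨.root _, Or.inr (Or.inl ⟨by simpa using hs, rfl, rfl⟩)⟩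
      · exact ⟨.pr p, Or.inr (Or.inr (Or.inr ⟨p, q, rfl, rfl, hp⟩))⟩

lemma card_childSet : ∀ (A : CF X) (s : Sw A), (childSet A s).ncard = nchild A := by
  intro A
  induction A with
  | atom x =>
    intro s
    have : childSet (.atom x : CF X) s = ∅ :=
      Set.eq_empty_iff_forall_notMem.2 (by rintro p ⟨p', hp⟩; simp [adj] at hp)
    rw [this]; simp [nchild]
  | natom x =>
    intro s
    have : childSet (.natom x : CF X) s = ∅ :=
      Set.eq_empty_iff_forall_notMem.2 (by rintro p ⟨p', hp⟩; simp [adj] at hp)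
    rw [this]; simp [nchild]
  | one =>
    intro s
    have : childSet (.one : CF X) s = ∅ :=
      Set.eq_empty_iff_forall_notMem.2 (by rintro p ⟨p', hp⟩; simp [adj] at hp)
    rw [this]; simp [nchild]
  | bot =>
    intro s
    have : childSet (.bot : CF X) s = ∅ :=
      Set.eq_empty_iff_forall_notMem.2 (by rintro p ⟨p', hp⟩; simp [adj] at hp)
    rw [this]; simp [nchild]
  | tens a b iha ihb =>
    intro s
    rw [ncard_split_tens, if_neg root_not_child, preim_tl_child, preim_tr_child,
      Set.ncard_insert_of_notMem root_not_child (Set.toFinite _),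
      Set.ncard_insert_of_notMem root_not_child (Set.toFinite _), iha, ihb]
    simp [nchild]; omega
  | par a b iha ihb =>
    intro s
    rw [ncard_split_par, if_neg root_not_child, preim_pl_child, preim_pr_child]
    by_cases hs : s.1 = true
    · rw [if_pos hs, if_pos hs,
        Set.ncard_insert_of_notMem root_not_child (Set.toFinite _), iha, ihb]
      simp [nchild]; omega
    · rw [if_neg hs, if_neg hs,
        Set.ncard_insert_of_notMem root_not_child (Set.toFinite _), iha, ihb]
      simp [nchild]; omega

-- ===== counting negative leaves =====

def negSet (A : CF X) : Set (Pos A) :=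
  {p | (∃ x, subAt p = .natom x) ∨ subAt p = .bot}

lemma card_negSet : ∀ A : CF X, (negSet A).ncard = nnegc A := by
  intro A
  induction A with
  | atom x =>
    have : negSet (.atom x : CF X) = ∅ := by
      apply Set.eq_empty_iff_forall_notMem.2
      intro p hp; cases p with
      | root => rcases hp with ⟨y, hy⟩ | hy <;> simp [subAt] at hy
    rw [this]; simp [nnegc]
  | natom x =>
    have : negSet (.natom x : CF X) = Set.univ :=
      Set.eq_univ_of_forall (fun p => by cases p; exact Or.inl ⟨x, rfl⟩)
    rw [this, Set.ncard_univ, pos_leaf_card.2.1 x]; simp [nnegc]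
  | one =>
    have : negSet (.one : CF X) = ∅ := by
      apply Set.eq_empty_iff_forall_notMem.2
      intro p hp; cases p with
      | root => rcases hp with ⟨y, hy⟩ | hy <;> simp [subAt] at hy
    rw [this]; simp [nnegc]
  | bot =>
    have : negSet (.bot : CF X) = Set.univ :=
      Set.eq_univ_of_forall (fun p => by cases p; exact Or.inr rfl)
    rw [this, Set.ncard_univ, pos_leaf_card.2.2.2]; simp [nnegc]
  | tens a b iha ihb =>
    have h1 : Pos.tl ⁻¹' negSet (.tens a b) = negSet a := rfl
    have h2 : Pos.tr ⁻¹' negSet (.tens a b) = negSet b := rfl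
    have h3 : Pos.root (.tens a b) ∉ negSet (.tens a b) := by
      rintro (⟨y, hy⟩ | hy) <;> simp [subAt] at hy
    rw [ncard_split_tens, if_neg h3, h1, h2, iha, ihb]; simp [nnegc]
  | par a b iha ihb =>
    have h1 : Pos.pl ⁻¹' negSet (.par a b) = negSet a := rfl
    have h2 : Pos.pr ⁻¹' negSet (.par a b) = negSet b := rfl
    have h3 : Pos.root (.par a b) ∉ negSet (.par a b) := by
      rintro (⟨y, hy⟩ | hy) <;> simp [subAt] at hy
    rw [ncard_split_par, if_neg h3, h1, h2, iha, ihb]; simp [nnegc]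

-- ===== the edge count of a glued switching =====

lemma not_internal_neg {C : CF X} (h : (∃ x, C = .natom x) ∨ C = .bot) : ¬ internal C := by
  rcases h with ⟨x, rfl⟩ | rfl <;> simp [internal]

lemma not_internal_pos {C : CF X} (h : (∃ x, C = .atom x) ∨ C = .one) : ¬ internal C := by
  rcases h with ⟨x, rfl⟩ | rfl <;> simp [internal]

lemma neg_pos_ne {W : CF X} {p q : Pos W}
    (hp : (∃ x, subAt p = CF.natom x) ∨ subAt p = CF.bot)
    (hq : (∃ x, subAt q = CF.atom x) ∨ subAt q = CF.one) : p ≠ q := by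
  rintro rfl
  rcases hp with ⟨x, hx⟩ | hx <;> rcases hq with ⟨y, hy⟩ | hy <;> rw [hx] at hy <;>
    simp [subAt] at hy

instance negLeafFinite {A : CF X} : Finite (NegLeaf A) := by
  unfold NegLeaf; exact Subtype.finite

lemma card_edgeSet_wired {W : CF X} (s : Sw W) (wire : NegLeaf W → PosLeaf W) :
    Nat.card (SimpleGraph.fromRel (fun p q =>
      adj W s p q ∨ ∃ n : NegLeaf W, p = n.1 ∧ q = (wire n).1)).edgeSet
      = nchild W + nnegc W := by
  classical
  set G := SimpleGraph.fromRel (fun p q =>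
      adj W s p q ∨ ∃ n : NegLeaf W, p = n.1 ∧ q = (wire n).1) with hG
  have hmem1 : ∀ (q : Pos W) (hq : ∃ p, adj W s p q),
      s(hq.choose, q) ∈ G.edgeSet := by
    intro q hq
    rw [SimpleGraph.mem_edgeSet]
    rw [hG]; simp only [SimpleGraph.fromRel_adj]
    exact ⟨adj_ne hq.choose_spec, Or.inl (Or.inl hq.choose_spec)⟩
  have hmem2 : ∀ n : NegLeaf W, s(n.1, (wire n).1) ∈ G.edgeSet := by
    intro n
    rw [SimpleGraph.mem_edgeSet]
    rw [hG]; simp only [SimpleGraph.fromRel_adj]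
    exact ⟨neg_pos_ne n.2 (wire n).2, Or.inl (Or.inr ⟨n, rfl, rfl⟩)⟩
  have key : Nat.card ({q : Pos W // ∃ p, adj W s p q} ⊕ NegLeaf W) =
      Nat.card G.edgeSet := by
    apply Nat.card_eq_of_bijective (Sum.elim
      (fun z : {q : Pos W // ∃ p, adj W s p q} => (⟨s(z.2.choose, z.1), hmem1 z.1 z.2⟩ :
        G.edgeSet))
      (fun n : NegLeaf W => ⟨s(n.1, (wire n).1), hmem2 n⟩))
    constructor
    · rintro (⟨q1, h1⟩ | n1) (⟨q2, h2⟩ | n2) h <;>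
        simp only [Sum.elim_inl, Sum.elim_inr, Subtype.mk.injEq, Sym2.eq_iff] at h
      · rcases h with ⟨hp, hq⟩ | ⟨hp, hq⟩
        · exact congrArg _ (Subtype.ext hq)
        · exfalso
          have s1 := h1.choose_spec
          have s2 := h2.choose_spec
          rw [hp] at s1
          rw [← hq] at s2
          exact adj_asymm s1 s2
      · exfalso
        have s1 := h1.choose_spec
        have hint := adj_internal s1
        rcases h with ⟨hp, hq⟩ | ⟨hp, hq⟩
        · rw [hp] at hint
          exact not_internal_neg n2.2 hint
        · rw [hp] at hint
          exact not_internal_pos (wire n2).2 hint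
      · exfalso
        have s2 := h2.choose_spec
        have hint := adj_internal s2
        rcases h with ⟨hp, hq⟩ | ⟨hp, hq⟩
        · rw [← hp] at hint
          exact not_internal_neg n1.2 hint
        · rw [← hq] at hint
          exact not_internal_pos (wire n1).2 hint
      · rcases h with ⟨hp, hq⟩ | ⟨hp, hq⟩
        · exact congrArg _ (Subtype.ext hp)
        · exact absurd hp (neg_pos_ne n1.2 (wire n2).2)
    · rintro ⟨e, he⟩
      induction e using Sym2.ind with
      | _ p q =>
        rw [SimpleGraph.mem_edgeSet] at he
        obtain ⟨hne, hrel | hrel⟩ := (SimpleGraph.fromRel_adj _ p q).mp he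
        · rcases hrel with hadj | ⟨n, rfl, rfl⟩
          · refine ⟨Sum.inl ⟨q, ⟨p, hadj⟩⟩, Subtype.ext ?_⟩
            simp only [Sum.elim_inl]
            rw [adj_parent_unique (⟨p, hadj⟩ : ∃ p', adj W s p' q).choose_spec hadj]
          · exact ⟨Sum.inr n, rfl⟩
        · rcases hrel with hadj | ⟨n, hn1, hn2⟩
          · refine ⟨Sum.inl ⟨p, ⟨q, hadj⟩⟩, Subtype.ext ?_⟩
            simp only [Sum.elim_inl]
            rw [adj_parent_unique (⟨q, hadj⟩ : ∃ p', adj W s p' p).choose_spec hadj]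
            exact Sym2.eq_swap
          · refine ⟨Sum.inr n, Subtype.ext ?_⟩
            simp only [Sum.elim_inr]
            rw [← hn1, ← hn2]
            exact Sym2.eq_swap
  rw [← key, Nat.card_sum]
  congr 1
  · have e1 : Nat.card {q : Pos W // ∃ p, adj W s p q} = Nat.card (childSet W s) :=
      Nat.card_congr (Equiv.subtypeEquivRight (fun q => Iff.rfl))
    rw [e1, Nat.card_coe_set_eq, card_childSet]
  · have e2 : Nat.card (NegLeaf W) = Nat.card (negSet W) :=
      Nat.card_congr (Equiv.subtypeEquivRight (fun q => Iff.rfl))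
    rw [e2, Nat.card_coe_set_eq, card_negSet]

/-- Every switching of a candidate morphism has exactly one more vertex than
it has edges; consequently it is acyclic iff it is connected. -/
theorem candidate_switching_count {A B : IF X} (M : Candidate A B)
    (s : Sw (mform A M.T B)) :
    Nat.card (Pos (mform A M.T B)) = Nat.card (glued M s).edgeSet + 1 ∧
    ((glued M s).IsAcyclic ↔ (glued M s).Connected) := by
  have hE : Nat.card (glued M s).edgeSet
      = nchild (mform A M.T B) + nnegc (mform A M.T B) :=
    card_edgeSet_wired s M.wire
  have hV := card_pos (mform A M.T B)
  have hsz := nchild_nparc_size (mform A M.T B)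
  have hneg : nnegc (mform A M.T B) = nparc (mform A M.T B) :=
    (counts_tr (.limp (.tens A M.T) B)).1
  have hcount : Nat.card (Pos (mform A M.T B)) = Nat.card (glued M s).edgeSet + 1 := by
    omega
  exact ⟨hcount, LLNetsAux.key_graph _ hcount⟩

end LLNets
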